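/- arXiv:2303.04444 — 3 statements merged into one kernel-verified Lean document; each statement's English description precedes it below -/
import Mathlib

section
/- Let M_0 > 0 be such that x^* ∈ B(0,M_0) and inf_{|x| > M_0} inf_{z ∈ Q} v(x,z) > 4V^*/P(Z ∈ Q) (such M_0 exists by the coercivity assumption (ii)). Then there exists C > 0 such that for all n ≥ 1, E[|V_n(X_n^*) − V^*| · 1_{|X_n^*| > M_0}] ≤ C n^{−1}. -/
/-!
On the event `A = {‖Xₙ*‖ > M₀}` every term `v(Xₙ*, Zᵢ)` with `Zᵢ ∈ Q` is at least `m`, so the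
minimal value is squeezed: `m Tₙ ≤ Vₙ(Xₙ*) ≤ Vₙ(x⋆) = Sₙ`, where `Tₙ` is the empirical frequency
of `Q` and `Sₙ` the empirical mean of `v(x⋆, Zᵢ)`. Since `m > 4V*/κ`, on `A` either `Tₙ < κ/2` or
`Sₙ > 2V*`, hence `1 ≤ 4(Tₙ - κ)²/κ² + (Sₙ - V*)²/V*²` there; as `Sₙ` and `Tₙ` have variances
of order `1/n`, Markov's inequality gives `P(A) = O(1/n)`. Finally `|x| ≤ (1 + x²)/2` turns
`0 ≤ Vₙ(Xₙ*) ≤ Sₙ` into `|Vₙ(Xₙ*) - V*| ≤ V* + 1/2 + (Sₙ - V*)²/2`, whose integral over `A` is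
`O(1/n)`.
-/

open MeasureTheory ProbabilityTheory Filter Finset

noncomputable def empiricalMean {Ω : Type*} (X : ℕ → Ω → ℝ) (n : ℕ) (ω : Ω) : ℝ :=
  (n : ℝ)⁻¹ * ∑ i ∈ range n, X i ω

lemma empiricalMean_nonneg {Ω : Type*} {X : ℕ → Ω → ℝ} {ω : Ω} (hX : ∀ i, 0 ≤ X i ω)
    (n : ℕ) : 0 ≤ empiricalMean X n ω :=
  mul_nonneg (by positivity) (sum_nonneg fun i _ => hX i)

lemma mul_empiricalMean_indicator_le {Ω E : Type*} {Z : ℕ → Ω → E} {Q : Set E} {w : E → ℝ}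
    {m : ℝ} (hw : ∀ z, 0 ≤ w z) (hmw : ∀ z ∈ Q, m ≤ w z) (n : ℕ) (ω : Ω) :
    m * empiricalMean (fun i ω => Q.indicator 1 (Z i ω)) n ω ≤
      empiricalMean (fun i ω => w (Z i ω)) n ω := by
  rw [empiricalMean, empiricalMean, mul_left_comm, mul_sum]
  gcongr with i
  by_cases hz : Z i ω ∈ Q <;> simp [hz, hw, hmw]

section EmpiricalMean

variable {Ω : Type*} [MeasurableSpace Ω] {P : Measure Ω} {X : ℕ → Ω → ℝ}

lemma memLp_empiricalMean (hident : ∀ i, IdentDistrib (X i) (X 0) P P)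
    (hX : MemLp (X 0) 2 P) (n : ℕ) : MemLp (empiricalMean X n) 2 P :=
  (memLp_finsetSum _ fun i _ => (hident i).memLp_iff.2 hX).const_mul _

lemma integral_empiricalMean (hident : ∀ i, IdentDistrib (X i) (X 0) P P)
    (hX : Integrable (X 0) P) {n : ℕ} (hn : n ≠ 0) :
    ∫ ω, empiricalMean X n ω ∂P = ∫ ω, X 0 ω ∂P := by
  simp only [empiricalMean]
  rw [integral_const_mul, integral_finsetSum _ fun i _ => (hident i).integrable_iff.2 hX,
    sum_congr rfl fun i _ => (hident i).integral_eq, sum_const, card_range, nsmul_eq_mul]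
  field_simp

lemma variance_empiricalMean (hident : ∀ i, IdentDistrib (X i) (X 0) P P)
    (hindep : Pairwise fun i j => IndepFun (X i) (X j) P) (hX : MemLp (X 0) 2 P) (n : ℕ) :
    variance (empiricalMean X n) P = variance (X 0) P / n := by
  have hsum : variance (∑ i ∈ range n, X i) P = n * variance (X 0) P := by
    rw [IndepFun.variance_sum (fun i _ => (hident i).memLp_iff.2 hX)
      (fun i _ j _ hij => hindep hij), sum_congr rfl fun i _ => (hident i).variance_eq,
      sum_const, card_range, nsmul_eq_mul]
  have : empiricalMean X n = fun ω => (n : ℝ)⁻¹ * (∑ i ∈ range n, X i) ω := by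
    ext ω; simp [empiricalMean]
  rw [this, variance_const_mul, hsum]
  rcases eq_or_ne n 0 with rfl | hn
  · simp
  · field_simp

lemma integral_sq_empiricalMean_sub [IsFiniteMeasure P]
    (hident : ∀ i, IdentDistrib (X i) (X 0) P P)
    (hindep : Pairwise fun i j => IndepFun (X i) (X j) P) (hX : MemLp (X 0) 2 P) {n : ℕ}
    (hn : n ≠ 0) :
    ∫ ω, (empiricalMean X n ω - ∫ ω, X 0 ω ∂P) ^ 2 ∂P = variance (X 0) P / n := by
  rw [← integral_empiricalMean hident (hX.integrable one_le_two) hn, ← variance_eq_integral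
    (memLp_empiricalMean hident hX n).aestronglyMeasurable.aemeasurable,
    variance_empiricalMean hident hindep hX]

section Samples

variable {E : Type*} [MeasurableSpace E] {Z : ℕ → Ω → E} {g : E → ℝ}

lemma memLp_empiricalMean_comp (hident : ∀ i, IdentDistrib (Z i) (Z 0) P P)
    (hg : Measurable g) (hgZ : MemLp (fun ω => g (Z 0 ω)) 2 P) (n : ℕ) :
    MemLp (empiricalMean (fun i ω => g (Z i ω)) n) 2 P :=
  memLp_empiricalMean (fun i => (hident i).comp hg) hgZ n

lemma integral_sq_empiricalMean_comp_sub [IsFiniteMeasure P]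
    (hident : ∀ i, IdentDistrib (Z i) (Z 0) P P) (hindep : iIndepFun Z P)
    (hg : Measurable g) (hgZ : MemLp (fun ω => g (Z 0 ω)) 2 P) {n : ℕ} (hn : n ≠ 0) :
    ∫ ω, (empiricalMean (fun i ω => g (Z i ω)) n ω - ∫ ω, g (Z 0 ω) ∂P) ^ 2 ∂P =
      variance (fun ω => g (Z 0 ω)) P / n :=
  integral_sq_empiricalMean_sub (fun i => (hident i).comp hg)
    (fun _ _ hij => (hindep.indepFun hij).comp hg hg) hgZ hn

end Samples

end EmpiricalMean

lemma one_le_add_sq_dev_of_mul_le {κ V m t s : ℝ} (hκ : 0 < κ) (hV : 0 < V)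
    (hm : 4 * V / κ < m) (hts : m * t ≤ s) :
    1 ≤ 4 / κ ^ 2 * (t - κ) ^ 2 + (s - V) ^ 2 / V ^ 2 := by
  rcases lt_or_ge t (κ / 2) with ht | ht
  · have hdev : (κ / 2) ^ 2 ≤ (t - κ) ^ 2 := by nlinarith
    calc (1 : ℝ) = 4 / κ ^ 2 * (κ / 2) ^ 2 := by field_simp; ring
      _ ≤ 4 / κ ^ 2 * (t - κ) ^ 2 := by gcongr
      _ ≤ _ := le_add_of_nonneg_right (by positivity)
  · have hs : 2 * V < s := by
      have h4 : 4 * V < m * κ := (div_lt_iff₀ hκ).1 hm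
      nlinarith
    have hdev : V ^ 2 ≤ (s - V) ^ 2 := by nlinarith
    calc (1 : ℝ) = V ^ 2 / V ^ 2 := (div_self (by positivity)).symm
      _ ≤ (s - V) ^ 2 / V ^ 2 := by gcongr
      _ ≤ _ := le_add_of_nonneg_left (by positivity)

lemma abs_sub_le_add_sq_div_two {f s V : ℝ} (hV : 0 ≤ V) (hf : 0 ≤ f) (hfs : f ≤ s) :
    |f - V| ≤ V + 1 / 2 + (s - V) ^ 2 / 2 := by
  rw [abs_le]
  constructor <;> nlinarith [sq_nonneg (s - V), sq_nonneg (s - V - 1)]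

section Sandwich

variable {Ω : Type*} [MeasurableSpace Ω] {P : Measure Ω} [IsFiniteMeasure P]
  {F S T : Ω → ℝ} {A : Set Ω}

lemma measureReal_le_of_mul_le {κ V m : ℝ} (hκ : 0 < κ) (hV : 0 < V) (hm : 4 * V / κ < m)
    (hS : MemLp S 2 P) (hT : MemLp T 2 P) (hTS : ∀ ω ∈ A, m * T ω ≤ S ω) :
    P.real A ≤ 4 / κ ^ 2 * ∫ ω, (T ω - κ) ^ 2 ∂P + (∫ ω, (S ω - V) ^ 2 ∂P) / V ^ 2 := by
  have hT2 : Integrable (fun ω => 4 / κ ^ 2 * (T ω - κ) ^ 2) P :=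
    ((hT.sub (memLp_const κ)).integrable_sq).const_mul _
  have hS2 : Integrable (fun ω => (S ω - V) ^ 2 / V ^ 2) P :=
    ((hS.sub (memLp_const V)).integrable_sq).div_const _
  calc P.real A
      ≤ P.real {ω | 1 ≤ 4 / κ ^ 2 * (T ω - κ) ^ 2 + (S ω - V) ^ 2 / V ^ 2} :=
        measureReal_mono fun ω hω => one_le_add_sq_dev_of_mul_le hκ hV hm (hTS ω hω)
    _ ≤ ∫ ω, (4 / κ ^ 2 * (T ω - κ) ^ 2 + (S ω - V) ^ 2 / V ^ 2) ∂P := by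
        simpa only [one_mul, Pi.add_apply] using mul_meas_ge_le_integral_of_nonneg
          (ae_of_all _ fun ω => by simp only [Pi.zero_apply, Pi.add_apply]; positivity)
          (hT2.add hS2) 1
    _ = _ := by rw [integral_add hT2 hS2, integral_const_mul, integral_div]

lemma setIntegral_abs_sub_le {V : ℝ} (hV : 0 ≤ V) (hF : AEStronglyMeasurable F P)
    (hF0 : ∀ ω, 0 ≤ F ω) (hFS : ∀ ω, F ω ≤ S ω) (hS : MemLp S 2 P) :
    ∫ ω in A, |F ω - V| ∂P ≤ (V + 1 / 2) * P.real A + (∫ ω, (S ω - V) ^ 2 ∂P) / 2 := by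
  have hS2 : Integrable (fun ω => (S ω - V) ^ 2) P := (hS.sub (memLp_const V)).integrable_sq
  have hFint : Integrable F P := (hS.integrable one_le_two).mono' hF
    (ae_of_all _ fun ω => by rw [Real.norm_eq_abs, abs_of_nonneg (hF0 ω)]; exact hFS ω)
  calc ∫ ω in A, |F ω - V| ∂P
      ≤ ∫ ω in A, (V + 1 / 2 + (S ω - V) ^ 2 / 2) ∂P :=
        setIntegral_mono (hFint.sub (integrable_const V)).abs.integrableOn
          ((integrable_const _).add (hS2.div_const 2)).integrableOn
          fun ω => abs_sub_le_add_sq_div_two hV (hF0 ω) (hFS ω)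
    _ = (V + 1 / 2) * P.real A + (∫ ω in A, (S ω - V) ^ 2 ∂P) / 2 := by
        rw [integral_add (integrable_const _).integrableOn (hS2.div_const 2).integrableOn,
          setIntegral_const, integral_div, smul_eq_mul, mul_comm]
    _ ≤ _ := by
        have := setIntegral_le_integral (s := A) hS2
          (ae_of_all _ fun ω => sq_nonneg (S ω - V))
        linarith

lemma setIntegral_abs_sub_le_of_sandwich {κ V m : ℝ} (hκ : 0 < κ) (hV : 0 < V)
    (hm : 4 * V / κ < m) (hF : AEStronglyMeasurable F P) (hF0 : ∀ ω, 0 ≤ F ω)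
    (hFS : ∀ ω, F ω ≤ S ω) (hTF : ∀ ω ∈ A, m * T ω ≤ F ω) (hS : MemLp S 2 P)
    (hT : MemLp T 2 P) :
    ∫ ω in A, |F ω - V| ∂P ≤ (V + 1 / 2) *
        (4 / κ ^ 2 * ∫ ω, (T ω - κ) ^ 2 ∂P + (∫ ω, (S ω - V) ^ 2 ∂P) / V ^ 2) +
      (∫ ω, (S ω - V) ^ 2 ∂P) / 2 := by
  have hA := measureReal_le_of_mul_le hκ hV hm hS hT fun ω hω => (hTF ω hω).trans (hFS ω)
  calc ∫ ω in A, |F ω - V| ∂P ≤ (V + 1 / 2) * P.real A + (∫ ω, (S ω - V) ^ 2 ∂P) / 2 :=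
        setIntegral_abs_sub_le hV.le hF hF0 hFS hS
    _ ≤ _ := by gcongr

end Sandwich

theorem lemma2_expectation_outside_ball_general
    (d q : ℕ)
    (Ω : Type*) [MeasurableSpace Ω] (P : Measure Ω) [IsProbabilityMeasure P]
    -- the i.i.d. samples `Z₁, Z₂, …`
    (Z : ℕ → Ω → EuclideanSpace ℝ (Fin q))
    (hZmeas : ∀ i, Measurable (Z i))
    (hZident : ∀ i, Measure.map (Z i) P = Measure.map (Z 0) P)
    (hZindep : iIndepFun Z P)
    -- `V` continuous, positive, coercive, with minimizer `x⋆` and `𝔼[v(x,Z)] = V(x)`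
    (V : EuclideanSpace ℝ (Fin d) → ℝ)
    (hVpos : ∀ x, 0 < V x)
    (v : EuclideanSpace ℝ (Fin d) → EuclideanSpace ℝ (Fin q) → ℝ)
    (hvcont : Continuous
      (fun p : EuclideanSpace ℝ (Fin d) × EuclideanSpace ℝ (Fin q) => v p.1 p.2))
    (hvnonneg : ∀ x z, 0 ≤ v x z)
    (hvmean : ∀ x, ∫ ω, v x (Z 0 ω) ∂P = V x)
    (xstar : EuclideanSpace ℝ (Fin d))
    -- assumption (ii): compact `Q` with `κ := P(Z ∈ Q) > 0` and coercive `x ↦ inf_{z ∈ Q} v(x,z)`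
    (Q : Set (EuclideanSpace ℝ (Fin q))) (hQcomp : IsCompact Q)
    (hκpos : 0 < (P {ω | Z 0 ω ∈ Q}).toReal)
    -- assumption (iv): `𝔼[v(x⋆,Z)²] < ∞`
    (hsq : Integrable (fun ω => (v xstar (Z 0 ω)) ^ 2) P)
    -- the empirical functions `Vₙ` and their (measurable) minimizers `Xₙ*`
    (Vn : ℕ → Ω → EuclideanSpace ℝ (Fin d) → ℝ)
    (hVn : ∀ n ω x, Vn n ω x = (n : ℝ)⁻¹ * ∑ i ∈ Finset.range n, v x (Z i ω))
    (Xn : ℕ → Ω → EuclideanSpace ℝ (Fin d))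
    (hXnmeas : ∀ n, Measurable (Xn n))
    (hXnmin : ∀ n ω x, Vn n ω (Xn n ω) ≤ Vn n ω x)
    -- the choice of `M₀`: `x⋆ ∈ B(0,M₀)` and `inf_{|x|>M₀} inf_{z∈Q} v(x,z) > 4V*/P(Z∈Q)`
    (M0 : ℝ)
    (hM0inf : ∃ m : ℝ, 4 * V xstar / (P {ω | Z 0 ω ∈ Q}).toReal < m ∧
      ∀ x : EuclideanSpace ℝ (Fin d), M0 < ‖x‖ → ∀ z ∈ Q, m ≤ v x z) :
    ∃ C : ℝ, 0 < C ∧ ∀ n : ℕ, 1 ≤ n →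
      ∫ ω in {ω | M0 < ‖Xn n ω‖}, |Vn n ω (Xn n ω) - V xstar| ∂P ≤ C / n := by
  obtain ⟨m, hm, hm_le⟩ := hM0inf
  set κ := (P {ω | Z 0 ω ∈ Q}).toReal
  have hident : ∀ i, IdentDistrib (Z i) (Z 0) P P := fun i =>
    ⟨(hZmeas i).aemeasurable, (hZmeas 0).aemeasurable, hZident i⟩
  have hv : Measurable (v xstar) := (hvcont.comp (Continuous.prodMk_right xstar)).measurable
  have hv2 : MemLp (fun ω => v xstar (Z 0 ω)) 2 P :=
    (memLp_two_iff_integrable_sq (hv.comp (hZmeas 0)).aestronglyMeasurable).2 hsq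
  have hQ : MeasurableSet Q := hQcomp.isClosed.measurableSet
  set indQ : EuclideanSpace ℝ (Fin q) → ℝ := Q.indicator 1
  have hind : Measurable indQ := measurable_const.indicator hQ
  have hind2 : MemLp (fun ω => indQ (Z 0 ω)) 2 P :=
    memLp_indicator_const 2 (hZmeas 0 hQ) 1 (Or.inr (measure_ne_top _ _))
  have hκ : ∫ ω, indQ (Z 0 ω) ∂P = κ := integral_indicator_one (hZmeas 0 hQ)
  set σv := variance (fun ω => v xstar (Z 0 ω)) P
  set σQ := variance (fun ω => indQ (Z 0 ω)) P
  set C := (V xstar + 1 / 2) * (4 / κ ^ 2 * σQ + σv / V xstar ^ 2) + σv / 2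
  refine ⟨max C 1, lt_max_of_lt_right one_pos, fun n hn => ?_⟩
  have hVn' : ∀ ω x, Vn n ω x = empiricalMean (fun i ω => v x (Z i ω)) n ω := hVn n
  have hF : Measurable fun ω => Vn n ω (Xn n ω) := by
    simp only [hVn]; have := hvcont.measurable; fun_prop
  have hF0 : ∀ ω, 0 ≤ Vn n ω (Xn n ω) := fun ω => by
    rw [hVn']; exact empiricalMean_nonneg (fun i => hvnonneg _ (Z i ω)) n
  have hFS : ∀ ω, Vn n ω (Xn n ω) ≤ empiricalMean (fun i ω => v xstar (Z i ω)) n ω :=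
    fun ω => (hXnmin n ω xstar).trans_eq (hVn' ω xstar)
  have hTF : ∀ ω ∈ {ω | M0 < ‖Xn n ω‖},
      m * empiricalMean (fun i ω => indQ (Z i ω)) n ω ≤ Vn n ω (Xn n ω) := fun ω hω => by
    rw [hVn']; exact mul_empiricalMean_indicator_le (hvnonneg _) (hm_le _ hω) n ω
  have hbound := setIntegral_abs_sub_le_of_sandwich hκpos (hVpos xstar) hm
    hF.aestronglyMeasurable hF0 hFS hTF (memLp_empiricalMean_comp hident hv hv2 n)
    (memLp_empiricalMean_comp hident hind hind2 n)
  have hn0 : n ≠ 0 := Nat.one_le_iff_ne_zero.mp hn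
  have hSvar := hvmean xstar ▸ integral_sq_empiricalMean_comp_sub hident hZindep hv hv2 hn0
  have hTvar := hκ ▸ integral_sq_empiricalMean_comp_sub hident hZindep hind hind2 hn0
  rw [hSvar, hTvar] at hbound
  calc _ ≤ _ := hbound
    _ = C / n := by ring
    _ ≤ max C 1 / n := by gcongr; exact le_max_left C 1

/-- **Lemma 2.** Let `M₀ > 0` be such that `x⋆ ∈ B(0,M₀)` and
`inf_{|x| > M₀} inf_{z ∈ Q} v(x,z) > 4V*/P(Z ∈ Q)` (such an `M₀` exists by the
coercivity assumption (ii)). Then there exists `C > 0` such that for all `n ≥ 1`,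
`𝔼[|Vₙ(Xₙ*) − V*| · 1_{|Xₙ*| > M₀}] ≤ C n⁻¹`. -/
theorem lemma2_expectation_outside_ball
    (d q : ℕ) (hd : 0 < d) (hq : 0 < q)
    (Ω : Type*) [MeasurableSpace Ω] (P : Measure Ω) [IsProbabilityMeasure P]
    -- the i.i.d. samples `Z₁, Z₂, …`
    (Z : ℕ → Ω → EuclideanSpace ℝ (Fin q))
    (hZmeas : ∀ i, Measurable (Z i))
    (hZident : ∀ i, Measure.map (Z i) P = Measure.map (Z 0) P)
    (hZindep : iIndepFun Z P)
    -- `V` continuous, positive, coercive, with minimizer `x⋆` and `𝔼[v(x,Z)] = V(x)`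
    (V : EuclideanSpace ℝ (Fin d) → ℝ)
    (hVcont : Continuous V) (hVpos : ∀ x, 0 < V x)
    (hVcoercive : Tendsto V (cocompact (EuclideanSpace ℝ (Fin d))) atTop)
    (v : EuclideanSpace ℝ (Fin d) → EuclideanSpace ℝ (Fin q) → ℝ)
    (hvcont : Continuous (fun p : EuclideanSpace ℝ (Fin d) × EuclideanSpace ℝ (Fin q) => v p.1 p.2))
    (hvnonneg : ∀ x z, 0 ≤ v x z)
    (hvint : ∀ x, Integrable (fun ω => v x (Z 0 ω)) P)
    (hvmean : ∀ x, ∫ ω, v x (Z 0 ω) ∂P = V x)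
    (xstar : EuclideanSpace ℝ (Fin d))
    (hxstar_min : ∀ x, V xstar ≤ V x)
    -- assumption (ii): compact `Q` with `κ := P(Z ∈ Q) > 0` and coercive `x ↦ inf_{z ∈ Q} v(x,z)`
    (Q : Set (EuclideanSpace ℝ (Fin q))) (hQcomp : IsCompact Q)
    (hκpos : 0 < (P {ω | Z 0 ω ∈ Q}).toReal)
    (hQcoercive : Tendsto (fun x => ⨅ z : Q, v x (z : EuclideanSpace ℝ (Fin q)))
      (cocompact (EuclideanSpace ℝ (Fin d))) atTop)
    -- assumption (iv): `𝔼[v(x⋆,Z)²] < ∞`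
    (hsq : Integrable (fun ω => (v xstar (Z 0 ω)) ^ 2) P)
    -- the empirical functions `Vₙ` and their (measurable) minimizers `Xₙ*`
    (Vn : ℕ → Ω → EuclideanSpace ℝ (Fin d) → ℝ)
    (hVn : ∀ n ω x, Vn n ω x = (n : ℝ)⁻¹ * ∑ i ∈ Finset.range n, v x (Z i ω))
    (Xn : ℕ → Ω → EuclideanSpace ℝ (Fin d))
    (hXnmeas : ∀ n, Measurable (Xn n))
    (hXnmin : ∀ n ω x, Vn n ω (Xn n ω) ≤ Vn n ω x)
    -- the choice of `M₀`: `x⋆ ∈ B(0,M₀)` and `inf_{|x|>M₀} inf_{z∈Q} v(x,z) > 4V*/P(Z∈Q)`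
    (M0 : ℝ) (hM0pos : 0 < M0) (hxstarM0 : ‖xstar‖ ≤ M0)
    (hM0inf : ∃ m : ℝ, 4 * V xstar / (P {ω | Z 0 ω ∈ Q}).toReal < m ∧
      ∀ x : EuclideanSpace ℝ (Fin d), M0 < ‖x‖ → ∀ z ∈ Q, m ≤ v x z) :
    ∃ C : ℝ, 0 < C ∧ ∀ n : ℕ, 1 ≤ n →
      ∫ ω in {ω | M0 < ‖Xn n ω‖}, |Vn n ω (Xn n ω) - V xstar| ∂P ≤ C / n :=
  lemma2_expectation_outside_ball_general d q Ω P Z hZmeas hZident hZindep V hVpos v hvcont hvnonneg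
    hvmean xstar Q hQcomp hκpos hsq Vn hVn Xn hXnmeas hXnmin M0 hM0inf
end

section
/- Let M_0 > 0 be such that x^* ∈ B(0,M_0) and inf_{|x| > M_0} inf_{z ∈ Q} v(x,z) > 4V^*/P(Z ∈ Q). Then there exists C > 0 such that for all n ≥ 1, P(|X_n^*| > M_0) ≤ C/n. -/
open MeasureTheory ProbabilityTheory Filter

/-!
If `|Xₙ*| > M₀`, then every sample falling in `Q` contributes at least `m` to `Vₙ(Xₙ*)`
(where `4V*/κ < m ≤ v(x, z)` for `|x| > M₀`, `z ∈ Q`), so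
`m · #{i < n | Zᵢ ∈ Q} ≤ n Vₙ(Xₙ*) ≤ n Vₙ(x⋆)`. Hence the i.i.d. sum of
`Yᵢ := v(x⋆, Zᵢ) - m 𝟙_Q(Zᵢ)` is nonnegative, although `𝔼[Yᵢ] = V* - mκ < 0`. The variables `Yᵢ` are
square integrable by (iv), so Chebyshev's inequality bounds the probability of this event by
`Var(Y₀) / (n (mκ - V*)²)`.
-/

section Chebyshev

variable {Ω : Type*} [MeasurableSpace Ω] {P : Measure Ω}

theorem measureReal_nonneg_le_variance_div_sq [IsFiniteMeasure P] {X : Ω → ℝ} (hX : MemLp X 2 P)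
    (hneg : P[X] < 0) : P.real {ω | 0 ≤ X ω} ≤ variance X P / P[X] ^ 2 := by
  have hsub : {ω | 0 ≤ X ω} ⊆ {ω | -P[X] ≤ |X ω - P[X]|} := fun ω hω =>
    (by linarith [hω.out] : -P[X] ≤ X ω - P[X]).trans (le_abs_self _)
  calc P.real {ω | 0 ≤ X ω} ≤ P.real {ω | -P[X] ≤ |X ω - P[X]|} := measureReal_mono hsub
    _ ≤ variance X P / (-P[X]) ^ 2 :=
      ENNReal.toReal_le_of_le_ofReal (div_nonneg (variance_nonneg _ _) (sq_nonneg _))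
        (meas_ge_le_variance_div_sq hX (by linarith))
    _ = variance X P / P[X] ^ 2 := by rw [neg_sq]

theorem measureReal_sum_nonneg_le_variance_div_sq_div [IsFiniteMeasure P] {Y : ℕ → Ω → ℝ}
    (hY : MemLp (Y 0) 2 P) (hident : ∀ i, IdentDistrib (Y i) (Y 0) P P)
    (hindep : Pairwise fun i j => IndepFun (Y i) (Y j) P) (hneg : P[Y 0] < 0) {n : ℕ} (hn : 0 < n) :
    P.real {ω | 0 ≤ ∑ i ∈ Finset.range n, Y i ω} ≤ variance (Y 0) P / P[Y 0] ^ 2 / n := by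
  have hYi : ∀ i ∈ Finset.range n, MemLp (Y i) 2 P := fun i _ => (hident i).memLp_iff.2 hY
  have hmean : P[∑ i ∈ Finset.range n, Y i] = (n : ℝ) * P[Y 0] := by
    simp only [Finset.sum_apply]
    rw [integral_finsetSum _ fun i hi => (hYi i hi).integrable one_le_two]
    simp [fun i => (hident i).integral_eq]
  have hvar : variance (∑ i ∈ Finset.range n, Y i) P = (n : ℝ) * variance (Y 0) P := by
    rw [IndepFun.variance_sum hYi fun i _ j _ hij => hindep hij]
    simp [fun i => (hident i).variance_eq]
  have hn' : (0 : ℝ) < n := Nat.cast_pos.2 hn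
  have key := measureReal_nonneg_le_variance_div_sq (memLp_finsetSum' _ hYi)
    (by rw [hmean]; exact mul_neg_of_pos_of_neg hn' hneg)
  rw [hmean, hvar] at key
  simp only [Finset.sum_apply] at key
  exact key.trans_eq (by field_simp)

end Chebyshev

theorem indicator_comp_eq_indicator_preimage {α β : Type*} {Z : α → β} {Q : Set β} (m : ℝ) :
    (fun ω => Q.indicator (fun _ => m) (Z ω)) = (Z ⁻¹' Q).indicator fun _ => m :=
  funext fun _ => (Set.indicator_comp_right Z).symm

section

variable {Ω E : Type*} [MeasurableSpace Ω] [MeasurableSpace E] {P : Measure Ω} {Z : Ω → E}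
  {Q : Set E} {g : E → ℝ}

theorem MemLp.sub_indicator_comp [IsFiniteMeasure P] (hZ : Measurable Z) (hQ : MeasurableSet Q)
    (hg : MemLp (fun ω => g (Z ω)) 2 P) (m : ℝ) :
    MemLp (fun ω => g (Z ω) - Q.indicator (fun _ => m) (Z ω)) 2 P :=
  hg.sub <| indicator_comp_eq_indicator_preimage (Z := Z) m ▸
    memLp_indicator_const 2 (hZ hQ) m (Or.inr (measure_ne_top _ _))

theorem integral_sub_indicator_comp [IsFiniteMeasure P] (hZ : Measurable Z) (hQ : MeasurableSet Q)
    (hg : Integrable (fun ω => g (Z ω)) P) (m : ℝ) :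
    P[fun ω => g (Z ω) - Q.indicator (fun _ => m) (Z ω)] =
      P[fun ω => g (Z ω)] - m * P.real (Z ⁻¹' Q) := by
  have hint : Integrable (fun ω => Q.indicator (fun _ => m) (Z ω)) P :=
    indicator_comp_eq_indicator_preimage m ▸ (integrable_const m).indicator (hZ hQ)
  rw [integral_sub hg hint, indicator_comp_eq_indicator_preimage,
    integral_indicator_const _ (hZ hQ), smul_eq_mul, mul_comm]

end

theorem sum_sub_indicator_nonneg_of_sum_le {ι β : Type*} {s : Finset ι} {z : ι → β} {Q : Set β}
    {m : ℝ} {f g : β → ℝ} (hf : ∀ y, Q.indicator (fun _ => m) y ≤ f y)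
    (hfg : ∑ i ∈ s, f (z i) ≤ ∑ i ∈ s, g (z i)) :
    0 ≤ ∑ i ∈ s, (g (z i) - Q.indicator (fun _ => m) (z i)) := by
  rw [Finset.sum_sub_distrib, sub_nonneg]
  exact (Finset.sum_le_sum fun i _ => hf (z i)).trans hfg

theorem prob_minimizer_outside_ball_general
    (d q : ℕ)
    (Ω : Type*) [MeasurableSpace Ω] (P : Measure Ω) [IsProbabilityMeasure P]
    -- the i.i.d. samples `Z₁, Z₂, …`
    (Z : ℕ → Ω → EuclideanSpace ℝ (Fin q))
    (hZmeas : ∀ i, Measurable (Z i))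
    (hZident : ∀ i, Measure.map (Z i) P = Measure.map (Z 0) P)
    (hZindep : iIndepFun Z P)
    -- `V` continuous, positive, coercive, with minimizer `x⋆` and `𝔼[v(x,Z)] = V(x)`
    (V : EuclideanSpace ℝ (Fin d) → ℝ)
    (hVpos : ∀ x, 0 < V x)
    (v : EuclideanSpace ℝ (Fin d) → EuclideanSpace ℝ (Fin q) → ℝ)
    (hvcont : Continuous (fun p : EuclideanSpace ℝ (Fin d) × EuclideanSpace ℝ (Fin q) => v p.1 p.2))
    (hvnonneg : ∀ x z, 0 ≤ v x z)
    (hvint : ∀ x, Integrable (fun ω => v x (Z 0 ω)) P)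
    (hvmean : ∀ x, ∫ ω, v x (Z 0 ω) ∂P = V x)
    (xstar : EuclideanSpace ℝ (Fin d))
    -- assumption (ii): compact `Q` with `κ := P(Z ∈ Q) > 0` and coercive `x ↦ inf_{z ∈ Q} v(x,z)`
    (Q : Set (EuclideanSpace ℝ (Fin q))) (hQcomp : IsCompact Q)
    (hκpos : 0 < (P {ω | Z 0 ω ∈ Q}).toReal)
    -- assumption (iv): `𝔼[v(x⋆,Z)²] < ∞`
    (hsq : Integrable (fun ω => (v xstar (Z 0 ω)) ^ 2) P)
    -- the empirical functions `Vₙ` and their (measurable) minimizers `Xₙ*`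
    (Vn : ℕ → Ω → EuclideanSpace ℝ (Fin d) → ℝ)
    (hVn : ∀ n ω x, Vn n ω x = (n : ℝ)⁻¹ * ∑ i ∈ Finset.range n, v x (Z i ω))
    (Xn : ℕ → Ω → EuclideanSpace ℝ (Fin d))
    (hXnmin : ∀ n ω x, Vn n ω (Xn n ω) ≤ Vn n ω x)
    -- the choice of `M₀`: `x⋆ ∈ B(0,M₀)` and `inf_{|x|>M₀} inf_{z∈Q} v(x,z) > 4V*/P(Z∈Q)`
    (M0 : ℝ)
    (hM0inf : ∃ m : ℝ, 4 * V xstar / (P {ω | Z 0 ω ∈ Q}).toReal < m ∧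
      ∀ x : EuclideanSpace ℝ (Fin d), M0 < ‖x‖ → ∀ z ∈ Q, m ≤ v x z) :
    ∃ C : ℝ, 0 < C ∧ ∀ n : ℕ, 1 ≤ n →
      (P {ω | M0 < ‖Xn n ω‖}).toReal ≤ C / n := by
  obtain ⟨m, hm, hmQ⟩ := hM0inf
  have hQ : MeasurableSet Q := hQcomp.isClosed.measurableSet
  set u : EuclideanSpace ℝ (Fin q) → ℝ := fun z => v xstar z - Q.indicator (fun _ => m) z
  have hvstar : Measurable (v xstar) := (hvcont.comp (Continuous.prodMk_right xstar)).measurable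
  have hu : Measurable u := hvstar.sub (measurable_const.indicator hQ)
  have hL2 : MemLp (u ∘ Z 0) 2 P := MemLp.sub_indicator_comp (hZmeas 0) hQ
    ((memLp_two_iff_integrable_sq (hvstar.comp (hZmeas 0)).aestronglyMeasurable).2 hsq) m
  have hneg : P[u ∘ Z 0] < 0 := by
    have hmean : P[u ∘ Z 0] = V xstar - m * (P {ω | Z 0 ω ∈ Q}).toReal :=
      (integral_sub_indicator_comp (hZmeas 0) hQ (hvint xstar) m).trans (by rw [hvmean]; rfl)
    rw [hmean]
    linarith [hVpos xstar, (div_lt_iff₀ hκpos).1 hm]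
  have hident : ∀ i, IdentDistrib (u ∘ Z i) (u ∘ Z 0) P P := fun i =>
    (⟨(hZmeas i).aemeasurable, (hZmeas 0).aemeasurable, hZident i⟩ : IdentDistrib _ _ P P).comp hu
  have hindep : Pairwise fun i j => IndepFun (u ∘ Z i) (u ∘ Z j) P := fun i j hij =>
    (hZindep.comp (fun _ => u) fun _ => hu).indepFun hij
  refine ⟨variance (u ∘ Z 0) P / P[u ∘ Z 0] ^ 2 + 1,
    add_pos_of_nonneg_of_pos (div_nonneg (variance_nonneg _ _) (sq_nonneg _)) one_pos,
    fun n hn => ?_⟩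
  have houtside : {ω | M0 < ‖Xn n ω‖} ⊆ {ω | 0 ≤ ∑ i ∈ Finset.range n, (u ∘ Z i) ω} := by
    intro ω hω
    have hmin := hXnmin n ω xstar
    rw [hVn, hVn] at hmin
    exact sum_sub_indicator_nonneg_of_sum_le
      (fun _ => Set.indicator_apply_le' (hmQ _ hω _) fun _ => hvnonneg _ _)
      (le_of_mul_le_mul_left hmin (by positivity))
  calc (P {ω | M0 < ‖Xn n ω‖}).toReal
      ≤ P.real {ω | 0 ≤ ∑ i ∈ Finset.range n, (u ∘ Z i) ω} := measureReal_mono houtside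
    _ ≤ variance (u ∘ Z 0) P / P[u ∘ Z 0] ^ 2 / n :=
      measureReal_sum_nonneg_le_variance_div_sq_div hL2 hident hindep hneg hn
    _ ≤ _ := by gcongr; linarith

/-- Let `M₀ > 0` be such that `x⋆ ∈ B(0,M₀)` and
`inf_{|x| > M₀} inf_{z ∈ Q} v(x,z) > 4V*/P(Z ∈ Q)`. Then there exists `C > 0`
such that for all `n ≥ 1`, `P(|Xₙ*| > M₀) ≤ C/n`. -/
theorem prob_minimizer_outside_ball
    (d q : ℕ) (hd : 0 < d) (hq : 0 < q)
    (Ω : Type*) [MeasurableSpace Ω] (P : Measure Ω) [IsProbabilityMeasure P]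
    -- the i.i.d. samples `Z₁, Z₂, …`
    (Z : ℕ → Ω → EuclideanSpace ℝ (Fin q))
    (hZmeas : ∀ i, Measurable (Z i))
    (hZident : ∀ i, Measure.map (Z i) P = Measure.map (Z 0) P)
    (hZindep : iIndepFun Z P)
    -- `V` continuous, positive, coercive, with minimizer `x⋆` and `𝔼[v(x,Z)] = V(x)`
    (V : EuclideanSpace ℝ (Fin d) → ℝ)
    (hVcont : Continuous V) (hVpos : ∀ x, 0 < V x)
    (hVcoercive : Tendsto V (cocompact (EuclideanSpace ℝ (Fin d))) atTop)
    (v : EuclideanSpace ℝ (Fin d) → EuclideanSpace ℝ (Fin q) → ℝ)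
    (hvcont : Continuous (fun p : EuclideanSpace ℝ (Fin d) × EuclideanSpace ℝ (Fin q) => v p.1 p.2))
    (hvnonneg : ∀ x z, 0 ≤ v x z)
    (hvint : ∀ x, Integrable (fun ω => v x (Z 0 ω)) P)
    (hvmean : ∀ x, ∫ ω, v x (Z 0 ω) ∂P = V x)
    (xstar : EuclideanSpace ℝ (Fin d))
    (hxstar_min : ∀ x, V xstar ≤ V x)
    -- assumption (ii): compact `Q` with `κ := P(Z ∈ Q) > 0` and coercive `x ↦ inf_{z ∈ Q} v(x,z)`
    (Q : Set (EuclideanSpace ℝ (Fin q))) (hQcomp : IsCompact Q)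
    (hκpos : 0 < (P {ω | Z 0 ω ∈ Q}).toReal)
    (hQcoercive : Tendsto (fun x => ⨅ z : Q, v x (z : EuclideanSpace ℝ (Fin q)))
      (cocompact (EuclideanSpace ℝ (Fin d))) atTop)
    -- assumption (iv): `𝔼[v(x⋆,Z)²] < ∞`
    (hsq : Integrable (fun ω => (v xstar (Z 0 ω)) ^ 2) P)
    -- the empirical functions `Vₙ` and their (measurable) minimizers `Xₙ*`
    (Vn : ℕ → Ω → EuclideanSpace ℝ (Fin d) → ℝ)
    (hVn : ∀ n ω x, Vn n ω x = (n : ℝ)⁻¹ * ∑ i ∈ Finset.range n, v x (Z i ω))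
    (Xn : ℕ → Ω → EuclideanSpace ℝ (Fin d))
    (hXnmeas : ∀ n, Measurable (Xn n))
    (hXnmin : ∀ n ω x, Vn n ω (Xn n ω) ≤ Vn n ω x)
    -- the choice of `M₀`: `x⋆ ∈ B(0,M₀)` and `inf_{|x|>M₀} inf_{z∈Q} v(x,z) > 4V*/P(Z∈Q)`
    (M0 : ℝ) (hM0pos : 0 < M0) (hxstarM0 : ‖xstar‖ ≤ M0)
    (hM0inf : ∃ m : ℝ, 4 * V xstar / (P {ω | Z 0 ω ∈ Q}).toReal < m ∧
      ∀ x : EuclideanSpace ℝ (Fin d), M0 < ‖x‖ → ∀ z ∈ Q, m ≤ v x z) :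
    ∃ C : ℝ, 0 < C ∧ ∀ n : ℕ, 1 ≤ n →
      (P {ω | M0 < ‖Xn n ω‖}).toReal ≤ C / n :=
  prob_minimizer_outside_ball_general d q Ω P Z hZmeas hZident hZindep V hVpos v hvcont hvnonneg
    hvint hvmean xstar Q hQcomp hκpos hsq Vn hVn Xn hXnmin M0 hM0inf
end

section
/- Assume there exists a compact set Q ⊂ ℝ^q such that x ↦ inf_{z∈Q} v(x,z) is coercive and P(Z ∈ Q) > 0. Then, almost surely, for all n sufficiently large, the function V_n(x) = (1/n) Σ_{i=1}^n v(x,Z_i) is coercive (i.e. V_n(x) → ∞ as |x| → ∞). -/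
/-!
By the strong law of large numbers, almost surely the fraction of the samples `Z₁, …, Zₙ` lying
in `Q` eventually exceeds `κ / 2`, where `κ = P(Z ∈ Q) > 0`. Since `v ≥ 0`, each sample in `Q`
contributes at least `g x = inf_{z ∈ Q} v(x, z)` to the sum, so `Vₙ x ≥ (κ / 2) g x`, and the
right-hand side is coercive.
-/

open MeasureTheory ProbabilityTheory Filter Topology

theorem ae_tendsto_frequency {Ω E : Type*} [MeasurableSpace Ω] {P : Measure Ω}
    [IsFiniteMeasure P] [MeasurableSpace E] {Z : ℕ → Ω → E} (hZmeas : ∀ i, Measurable (Z i))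
    (hZident : ∀ i, P.map (Z i) = P.map (Z 0))
    (hZindep : Pairwise fun i j => IndepFun (Z i) (Z j) P) {Q : Set E} (hQ : MeasurableSet Q) :
    ∀ᵐ ω ∂P, Tendsto (fun n : ℕ => (n : ℝ)⁻¹ * ∑ i ∈ Finset.range n, Q.indicator 1 (Z i ω))
      atTop (𝓝 (P.real {ω | Z 0 ω ∈ Q})) := by
  have hf : Measurable (Q.indicator (1 : E → ℝ)) := measurable_const.indicator hQ
  have hcomp : (fun ω => Q.indicator (1 : E → ℝ) (Z 0 ω)) = (Z 0 ⁻¹' Q).indicator 1 :=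
    funext fun ω => (Set.indicator_comp_right (Z 0)).symm
  have hint : Integrable (fun ω => Q.indicator (1 : E → ℝ) (Z 0 ω)) P := by
    rw [hcomp]
    exact (integrable_const 1).indicator (hQ.preimage (hZmeas 0))
  have hmean : ∫ ω, Q.indicator (1 : E → ℝ) (Z 0 ω) ∂P = P.real {ω | Z 0 ω ∈ Q} := by
    rw [hcomp, integral_indicator_one (hQ.preimage (hZmeas 0))]
    rfl
  have hslln := strong_law_ae (fun i ω => Q.indicator (1 : E → ℝ) (Z i ω)) hint
    (fun i j hij => (hZindep hij).comp hf hf)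
    (fun i => IdentDistrib.comp
      ⟨(hZmeas i).aemeasurable, (hZmeas 0).aemeasurable, hZident i⟩ hf)
  simpa only [hmean, smul_eq_mul] using hslln

theorem indicator_one_mul_iInf_le {E : Type*} {Q : Set E} {f : E → ℝ} (hf : ∀ z, 0 ≤ f z)
    (y : E) : Q.indicator 1 y * ⨅ z : Q, f (z : E) ≤ f y := by
  by_cases hy : y ∈ Q
  · rw [Set.indicator_of_mem hy, Pi.one_apply, one_mul]
    exact ciInf_le (f := fun z : Q => f z) ⟨0, Set.forall_mem_range.2 fun z => hf (z : E)⟩ ⟨y, hy⟩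
  · rw [Set.indicator_of_notMem hy, zero_mul]
    exact hf y

theorem frequency_mul_iInf_le_mean {E : Type*} {Q : Set E} {f : E → ℝ} (hf : ∀ z, 0 ≤ f z)
    (z : ℕ → E) (n : ℕ) :
    ((n : ℝ)⁻¹ * ∑ i ∈ Finset.range n, Q.indicator 1 (z i)) * ⨅ y : Q, f (y : E) ≤
      (n : ℝ)⁻¹ * ∑ i ∈ Finset.range n, f (z i) := by
  rw [mul_assoc, Finset.sum_mul]
  gcongr with i
  exact indicator_one_mul_iInf_le hf (z i)

theorem empirical_eventually_coercive_general
    (d q : ℕ)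
    (Ω : Type*) [MeasurableSpace Ω] (P : Measure Ω) [IsProbabilityMeasure P]
    -- the i.i.d. samples `Z₁, Z₂, …`
    (Z : ℕ → Ω → EuclideanSpace ℝ (Fin q))
    (hZmeas : ∀ i, Measurable (Z i))
    (hZident : ∀ i, Measure.map (Z i) P = Measure.map (Z 0) P)
    (hZindep : iIndepFun Z P)
    -- `v` continuous and nonnegative
    (v : EuclideanSpace ℝ (Fin d) → EuclideanSpace ℝ (Fin q) → ℝ)
    (hvnonneg : ∀ x z, 0 ≤ v x z)
    -- assumption (ii): compact `Q`, coercive infimum, positive probability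
    (Q : Set (EuclideanSpace ℝ (Fin q))) (hQcomp : IsCompact Q)
    (hκpos : 0 < P {ω | Z 0 ω ∈ Q})
    (hQcoercive : Tendsto (fun x => ⨅ z : Q, v x (z : EuclideanSpace ℝ (Fin q)))
      (cocompact (EuclideanSpace ℝ (Fin d))) atTop)
    -- the empirical functions `Vₙ`
    (Vn : ℕ → Ω → EuclideanSpace ℝ (Fin d) → ℝ)
    (hVn : ∀ n ω x, Vn n ω x = (n : ℝ)⁻¹ * ∑ i ∈ Finset.range n, v x (Z i ω)) :
    ∀ᵐ ω ∂P, ∀ᶠ n in atTop,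
      Tendsto (fun x => Vn n ω x) (cocompact (EuclideanSpace ℝ (Fin d))) atTop := by
  have hκ : 0 < P.real {ω | Z 0 ω ∈ Q} := ENNReal.toReal_pos hκpos.ne' (measure_ne_top P _)
  filter_upwards [ae_tendsto_frequency hZmeas hZident (fun i j hij => hZindep.indepFun hij)
    hQcomp.isClosed.measurableSet] with ω hfreq
  filter_upwards [hfreq.eventually (eventually_ge_nhds (half_lt_self hκ))] with n hn
  refine tendsto_atTop_mono (fun x => ?_) (hQcoercive.const_mul_atTop (half_pos hκ))
  rw [hVn]
  exact (mul_le_mul_of_nonneg_right hn (Real.iInf_nonneg fun z : Q => hvnonneg x z)).trans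
    (frequency_mul_iInf_le_mean (hvnonneg x) (fun i => Z i ω) n)

/-- Assume there exists a compact set `Q ⊆ ℝ^q` such that `x ↦ inf_{z∈Q} v(x,z)` is
coercive and `P(Z ∈ Q) > 0`. Then, almost surely, for all `n` sufficiently large,
the function `Vₙ(x) = (1/n) Σᵢ v(x,Zᵢ)` is coercive (i.e. `Vₙ(x) → ∞` as `|x| → ∞`). -/
theorem empirical_eventually_coercive
    (d q : ℕ) (hd : 0 < d) (hq : 0 < q)
    (Ω : Type*) [MeasurableSpace Ω] (P : Measure Ω) [IsProbabilityMeasure P]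
    -- the i.i.d. samples `Z₁, Z₂, …`
    (Z : ℕ → Ω → EuclideanSpace ℝ (Fin q))
    (hZmeas : ∀ i, Measurable (Z i))
    (hZident : ∀ i, Measure.map (Z i) P = Measure.map (Z 0) P)
    (hZindep : iIndepFun Z P)
    -- `v` continuous and nonnegative
    (v : EuclideanSpace ℝ (Fin d) → EuclideanSpace ℝ (Fin q) → ℝ)
    (hvcont : Continuous (fun p : EuclideanSpace ℝ (Fin d) × EuclideanSpace ℝ (Fin q) => v p.1 p.2))
    (hvnonneg : ∀ x z, 0 ≤ v x z)
    -- assumption (ii): compact `Q`, coercive infimum, positive probability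
    (Q : Set (EuclideanSpace ℝ (Fin q))) (hQcomp : IsCompact Q)
    (hκpos : 0 < P {ω | Z 0 ω ∈ Q})
    (hQcoercive : Tendsto (fun x => ⨅ z : Q, v x (z : EuclideanSpace ℝ (Fin q)))
      (cocompact (EuclideanSpace ℝ (Fin d))) atTop)
    -- the empirical functions `Vₙ`
    (Vn : ℕ → Ω → EuclideanSpace ℝ (Fin d) → ℝ)
    (hVn : ∀ n ω x, Vn n ω x = (n : ℝ)⁻¹ * ∑ i ∈ Finset.range n, v x (Z i ω)) :
    ∀ᵐ ω ∂P, ∀ᶠ n in atTop,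
      Tendsto (fun x => Vn n ω x) (cocompact (EuclideanSpace ℝ (Fin d))) atTop :=
  empirical_eventually_coercive_general d q Ω P Z hZmeas hZident hZindep v hvnonneg Q hQcomp hκpos
    hQcoercive Vn hVn
end
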